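/- arXiv:2103.03946 — 2 statements merged into one kernel-verified Lean document; each statement's English description precedes it below -/
import Mathlib

section
/- Let X be a finite alphabet, F a finite set of words over X each of length at least 1, k a field, and A = k⟨X⟩/I(F). For every n ∈ ℕ, let A_n be the k-subspace of A spanned by the images of all words of length n. Then the images of the legal words of length n form a basis of A_n; in particular dim_k A_n = |L_n|, the number of legal words of length n. -/
/-- A word is *legal* (with respect to the set of forbidden words `F`) if no element of `F`
is a contiguous factor of it. -/
def MonomialLegal {X : Type*} (F : Set (FreeMonoid X)) (w : FreeMonoid X) : Prop :=
  ∀ f ∈ F, ∀ u v : FreeMonoid X, w ≠ u * f * v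

/-- The defining relation of the monomial algebra `A = k⟨X⟩/I(F)`: each forbidden word is
identified with `0`, so that `RingQuot` of this relation is the quotient of
`k⟨X⟩ = MonoidAlgebra k (FreeMonoid X)` by the two-sided ideal generated by the words of `F`. -/
def monomialRel (k X : Type*) [Field k] (F : Set (FreeMonoid X)) :
    MonoidAlgebra k (FreeMonoid X) → MonoidAlgebra k (FreeMonoid X) → Prop :=
  fun a b => b = 0 ∧ ∃ f ∈ F, a = MonoidAlgebra.of k (FreeMonoid X) f

/-! Let `J ⊆ k⟨X⟩` be the span of the words containing a forbidden factor. A word keeps its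
forbidden factor after multiplication on either side, so `J` is a two-sided ideal; it contains
`F`, hence the kernel of `k⟨X⟩ → A`. Conversely every illegal word dies in `A`, so the kernel is
exactly `J`. Since `J` meets the span of the legal words trivially, the legal words stay linearly
independent in `A`, while the illegal words of length `n` contribute nothing to `A_n`. -/

theorem RingQuot.mem_of_mkRingHom_eq_zero {R : Type*} [Ring R] {r : R → R → Prop}
    (I : TwoSidedIdeal R) (hr : ∀ ⦃a b⦄, r a b → a - b ∈ I) {x : R}
    (hx : mkRingHom r x = 0) : x ∈ I := by
  have hπ : I.ringCon.mk' x = 0 := by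
    rw [← lift_mkRingHom_apply I.ringCon.mk' fun a b h =>
      I.ringCon.eq.2 ((I.rel_iff a b).2 (hr h)), hx, map_zero]
  rwa [← TwoSidedIdeal.mem_ker, TwoSidedIdeal.ker_ringCon_mk'] at hπ

namespace MonoidAlgebra

variable {k G : Type*} [Ring k]

theorem disjoint_supported_compl (s : Set G) :
    Disjoint (supported k k s) (supported k k sᶜ) := by
  rw [Submodule.disjoint_def]
  intro x hs hsc
  rw [← coeff_eq_zero, ← Finsupp.support_eq_empty, ← Finset.coe_eq_empty]
  exact Set.subset_empty_iff.1 fun w hw => hsc hw (hs hw)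

variable (k) in
noncomputable def supportedTwoSidedIdeal [Monoid G] (S : Set G)
    (mul_mem_left : ∀ a b, b ∈ S → a * b ∈ S) (mul_mem_right : ∀ a b, a ∈ S → a * b ∈ S) :
    TwoSidedIdeal k[G] :=
  .mk' (supported k k S) (zero_mem _) add_mem neg_mem
    (fun {x y} hy w hw => by
      classical
      obtain ⟨a, -, b, hb, rfl⟩ := Finset.mem_mul.1 (support_coeff_mul_subset x y hw)
      exact mul_mem_left a b (hy hb))
    (fun {x y} hx w hw => by
      classical
      obtain ⟨a, ha, b, -, rfl⟩ := Finset.mem_mul.1 (support_coeff_mul_subset x y hw)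
      exact mul_mem_right a b (hx ha))

@[simp]
theorem mem_supportedTwoSidedIdeal [Monoid G] {S : Set G} {hl hr} {x : k[G]} :
    x ∈ supportedTwoSidedIdeal k S hl hr ↔ x ∈ supported k k S :=
  TwoSidedIdeal.mem_mk' ..

end MonoidAlgebra

section MonomialAlgebra

variable {X : Type*}

theorem MonomialLegal.of_mul_left {F : Set (FreeMonoid X)} {u w : FreeMonoid X}
    (h : MonomialLegal F (u * w)) :
    MonomialLegal F w :=
  fun f hf a b hw => h f hf (u * a) b (by rw [hw]; simp only [mul_assoc])

theorem MonomialLegal.of_mul_right {F : Set (FreeMonoid X)} {w v : FreeMonoid X}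
    (h : MonomialLegal F (w * v)) :
    MonomialLegal F w :=
  fun f hf a b hw => h f hf a (b * v) (by rw [hw]; simp only [mul_assoc])

theorem not_monomialLegal_of_mem {F : Set (FreeMonoid X)} {f : FreeMonoid X} (hf : f ∈ F) :
    ¬ MonomialLegal F f :=
  fun h => h f hf 1 1 (by simp)

variable (k : Type*) [Field k] (F : Set (FreeMonoid X))

theorem mkAlgHom_monomialRel_of_not_monomialLegal {w : FreeMonoid X}
    (hw : ¬ MonomialLegal F w) :
    RingQuot.mkAlgHom k (monomialRel k X F) (MonoidAlgebra.of k (FreeMonoid X) w) = 0 := by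
  simp only [MonomialLegal, not_forall, not_not] at hw
  obtain ⟨f, hf, u, v, rfl⟩ := hw
  have hf0 : RingQuot.mkAlgHom k (monomialRel k X F) (MonoidAlgebra.of k (FreeMonoid X) f) = 0 :=
    (RingQuot.mkAlgHom_rel k ⟨rfl, f, hf, rfl⟩).trans (map_zero _)
  simp only [map_mul, hf0, mul_zero, zero_mul]

theorem ker_mkAlgHom_monomialRel :
    LinearMap.ker (RingQuot.mkAlgHom k (monomialRel k X F)).toLinearMap =
      MonoidAlgebra.supported k k {w | MonomialLegal F w}ᶜ := by
  apply le_antisymm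
  · intro x hx
    rw [LinearMap.mem_ker, AlgHom.toLinearMap_apply, ← AlgHom.coe_toRingHom,
      RingQuot.mkAlgHom_coe] at hx
    refine MonoidAlgebra.mem_supportedTwoSidedIdeal.1 <| RingQuot.mem_of_mkRingHom_eq_zero
      (MonoidAlgebra.supportedTwoSidedIdeal k {w | MonomialLegal F w}ᶜ
        (fun _ _ => mt MonomialLegal.of_mul_left)
        (fun _ _ => mt MonomialLegal.of_mul_right)) ?_ hx
    rintro _ _ ⟨rfl, f, hf, rfl⟩
    rw [sub_zero, MonoidAlgebra.mem_supportedTwoSidedIdeal, MonoidAlgebra.of_apply,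
      MonoidAlgebra.mem_supported, MonoidAlgebra.coeff_single]
    exact (Finset.coe_subset.2 Finsupp.support_single_subset).trans
      (by simpa using not_monomialLegal_of_mem hf)
  · rw [MonoidAlgebra.supported_eq_span_single, Submodule.span_le]
    rintro _ ⟨w, hw, rfl⟩
    exact mkAlgHom_monomialRel_of_not_monomialLegal k F hw

theorem linearIndependent_mkAlgHom_monomialRel {ι : Type*} {v : ι → FreeMonoid X}
    (hv : Function.Injective v) (hlegal : ∀ i, MonomialLegal F (v i)) :
    LinearIndependent k
      fun i => RingQuot.mkAlgHom k (monomialRel k X F)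
        (MonoidAlgebra.of k (FreeMonoid X) (v i)) := by
  have hwords : LinearIndependent k (fun i => MonoidAlgebra.of k (FreeMonoid X) (v i)) := by
    simpa [Function.comp_def] using
      (MonoidAlgebra.basis (FreeMonoid X) k).linearIndependent.comp v hv
  have hspan : Submodule.span k (Set.range fun i => MonoidAlgebra.of k (FreeMonoid X) (v i)) ≤
      MonoidAlgebra.supported k k {w | MonomialLegal F w} := by
    rw [MonoidAlgebra.supported_eq_span_single]
    exact Submodule.span_mono (Set.range_subset_iff.2 fun i => ⟨v i, hlegal i, rfl⟩)
  refine hwords.map (f := (RingQuot.mkAlgHom k (monomialRel k X F)).toLinearMap) ?_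
  rw [ker_mkAlgHom_monomialRel]
  exact (MonoidAlgebra.disjoint_supported_compl _).mono_left hspan

theorem span_mkAlgHom_monomialRel_legal_eq (P : FreeMonoid X → Prop) :
    Submodule.span k (Set.range fun w : {w // P w ∧ MonomialLegal F w} =>
        RingQuot.mkAlgHom k (monomialRel k X F) (MonoidAlgebra.of k (FreeMonoid X) w.1)) =
      Submodule.span k (Set.range fun w : {w // P w} =>
        RingQuot.mkAlgHom k (monomialRel k X F) (MonoidAlgebra.of k (FreeMonoid X) w.1)) := by
  refine le_antisymm (Submodule.span_mono ?_) (Submodule.span_le.2 ?_)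
  · rintro _ ⟨w, rfl⟩
    exact ⟨⟨w.1, w.2.1⟩, rfl⟩
  · rintro _ ⟨⟨w, hw⟩, rfl⟩
    by_cases hlegal : MonomialLegal F w
    · exact Submodule.subset_span ⟨⟨w, hw, hlegal⟩, rfl⟩
    · simp only [mkAlgHom_monomialRel_of_not_monomialLegal k F hlegal, SetLike.mem_coe,
        Submodule.zero_mem]

end MonomialAlgebra

theorem legal_words_basis_of_graded_component_general
    (k X : Type*) [Field k] (F : Finset (FreeMonoid X)) (n : ℕ) :
    LinearIndependent k
      (fun w : {w : FreeMonoid X // FreeMonoid.length w = n ∧ MonomialLegal (↑F) w} =>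
        RingQuot.mkAlgHom k (monomialRel k X ↑F) (MonoidAlgebra.of k (FreeMonoid X) w.1)) ∧
    Submodule.span k
      (Set.range
        (fun w : {w : FreeMonoid X // FreeMonoid.length w = n ∧ MonomialLegal (↑F) w} =>
          RingQuot.mkAlgHom k (monomialRel k X ↑F) (MonoidAlgebra.of k (FreeMonoid X) w.1))) =
    Submodule.span k
      (Set.range
        (fun w : {w : FreeMonoid X // FreeMonoid.length w = n} =>
          RingQuot.mkAlgHom k (monomialRel k X ↑F) (MonoidAlgebra.of k (FreeMonoid X) w.1))) ∧
    Module.finrank k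
      ↥(Submodule.span k
        (Set.range
          (fun w : {w : FreeMonoid X // FreeMonoid.length w = n} =>
            RingQuot.mkAlgHom k (monomialRel k X ↑F)
              (MonoidAlgebra.of k (FreeMonoid X) w.1)))) =
    Nat.card {w : FreeMonoid X // FreeMonoid.length w = n ∧ MonomialLegal (↑F) w} := by
  have hli := linearIndependent_mkAlgHom_monomialRel k (F : Set (FreeMonoid X))
    (v := fun w : {w : FreeMonoid X // FreeMonoid.length w = n ∧ MonomialLegal (↑F) w} => w.1)
    Subtype.val_injective fun w => w.2.2
  have hspan := span_mkAlgHom_monomialRel_legal_eq k (F : Set (FreeMonoid X))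
    fun w => FreeMonoid.length w = n
  refine ⟨hli, hspan, ?_⟩
  rw [← hspan, Module.finrank, rank_span hli, ← Nat.card,
    Nat.card_range_of_injective hli.injective]

/-- In the monomial algebra `A = k⟨X⟩/I(F)`, for each `n`, the images of the legal words of
length `n` are linearly independent, they span the subspace `A_n` spanned by the images of all
words of length `n`, and consequently `dim_k A_n` equals the number of legal words of length
`n`. -/
theorem legal_words_basis_of_graded_component
    (k X : Type*) [Field k] [Fintype X] (F : Finset (FreeMonoid X))
    (hF : ∀ f ∈ F, 1 ≤ FreeMonoid.length f) (n : ℕ) :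
    LinearIndependent k
      (fun w : {w : FreeMonoid X // FreeMonoid.length w = n ∧ MonomialLegal (↑F) w} =>
        RingQuot.mkAlgHom k (monomialRel k X ↑F) (MonoidAlgebra.of k (FreeMonoid X) w.1)) ∧
    Submodule.span k
      (Set.range
        (fun w : {w : FreeMonoid X // FreeMonoid.length w = n ∧ MonomialLegal (↑F) w} =>
          RingQuot.mkAlgHom k (monomialRel k X ↑F) (MonoidAlgebra.of k (FreeMonoid X) w.1))) =
    Submodule.span k
      (Set.range
        (fun w : {w : FreeMonoid X // FreeMonoid.length w = n} =>
          RingQuot.mkAlgHom k (monomialRel k X ↑F) (MonoidAlgebra.of k (FreeMonoid X) w.1))) ∧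
    Module.finrank k
      ↥(Submodule.span k
        (Set.range
          (fun w : {w : FreeMonoid X // FreeMonoid.length w = n} =>
            RingQuot.mkAlgHom k (monomialRel k X ↑F)
              (MonoidAlgebra.of k (FreeMonoid X) w.1)))) =
    Nat.card {w : FreeMonoid X // FreeMonoid.length w = n ∧ MonomialLegal (↑F) w} :=
  legal_words_basis_of_graded_component_general k X F n
end

section
/- Let X be a finite alphabet and F a finite nonempty set of words over X, each of length at least 2, with l + 1 the maximal length of a word of F. Let M be the adjacency matrix of the Ufnarovski graph, an L_l × L_l matrix over ℝ with M(u,v) = 1 if some legal (l+1)-word has prefix u and suffix v and M(u,v) = 0 otherwise, and let ρ be the spectral radius of M over ℂ. Then the sequence |L_n|^{1/n} tends to ρ as n → ∞; that is, the algebraic entropy of the finitely presented monomial algebra equals the spectral radius of the adjacency matrix of its Ufnarovski graph. -/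
/-- A word is *legal* (with respect to the set of forbidden words `F`) if no element of `F`
is a contiguous factor of it. -/
def ListLegal {X : Type*} (F : Set (List X)) (w : List X) : Prop :=
  ∀ f ∈ F, ∀ u v : List X, w ≠ u ++ f ++ v

instance {X : Type*} [Finite X] (F : Set (List X)) (l : ℕ) :
    Finite {w : List X // w.length = l ∧ ListLegal F w} :=
  (Set.Finite.subset (List.finite_length_eq X l) fun _ hw => hw.1).to_subtype

noncomputable instance {X : Type*} [Finite X] (F : Set (List X)) (l : ℕ) :
    Fintype {w : List X // w.length = l ∧ ListLegal F w} :=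
  Fintype.ofFinite _

/-!
Reading off the windows of length `l` of a legal word of length `l + k` gives a walk of length
`k` in the Ufnarovski graph, and every such walk comes from exactly one legal word, because each
forbidden word fits into `l + 1` consecutive letters. Hence `|L_(l+k)|` is the sum of the entries
of `N ^ k`, where `N` is the `0/1` adjacency matrix. In the `ℓ∞` operator norm this sum lies
between `‖N ^ k‖` and `(|L_l| + 1) ‖N ^ k‖`, so Gelfand's formula `‖N ^ k‖ ^ (1/k) → ρ(N)` gives
the limit; shifting the exponent from `1/k` to `1/(l + k)` does not change it.
-/

open Filter Topology

section ListLegal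

variable {X : Type*} {F : Set (List X)} {w : List X}

theorem ListLegal.of_infix {w' : List X} (h : ListLegal F w) (h' : w' <:+: w) :
    ListLegal F w' := by
  intro f hf u v huv
  obtain ⟨s, t, rfl⟩ := h'
  exact h f hf (s ++ u) (v ++ t) (by simp [huv])

theorem ListLegal.take (h : ListLegal F w) (n : ℕ) : ListLegal F (w.take n) :=
  h.of_infix (w.take_prefix n).isInfix

theorem ListLegal.drop (h : ListLegal F w) (n : ℕ) : ListLegal F (w.drop n) :=
  h.of_infix (w.drop_suffix n).isInfix

/-- A factor of length at most `l + 1` of a word of length `n + 1` either avoids the last letter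
or lies within the last `l + 1` letters. -/
theorem ListLegal.of_take_of_drop {l n : ℕ} (hFle : ∀ f ∈ F, f.length ≤ l + 1)
    (hw : w.length = n + 1)
    (h₁ : ListLegal F (w.take n)) (h₂ : ListLegal F (w.drop (n - l))) : ListLegal F w := by
  intro f hf u v huv
  have hfl := hFle f hf
  have hlen : u.length + f.length + v.length = n + 1 := by
    have := congrArg List.length huv
    simp only [List.length_append, hw] at this
    omega
  rcases eq_or_ne v [] with rfl | hv
  · have hu : n - l - u.length = 0 := by simp at hlen; omega
    refine h₂ f hf (u.drop (n - l)) [] ?_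
    rw [huv, List.append_nil, List.drop_append, hu, List.drop_zero, List.append_nil]
  · have hv1 : 1 ≤ v.length := List.length_pos_iff.mpr hv
    refine h₁ f hf u (v.take (n - (u.length + f.length))) ?_
    rw [huv, List.append_assoc, List.take_append, List.take_of_length_le (by omega),
      List.take_append, List.take_of_length_le (by omega), List.append_assoc]
    congr 3
    omega

end ListLegal

theorem Nat.card_eq_sum_card_fiber {α β : Type*} [Finite α] [Fintype β] (g : α → β) :
    Nat.card α = ∑ b, Nat.card {a // g a = b} := by
  rw [← Nat.card_sigma, Nat.card_congr (Equiv.sigmaFiberEquiv g)]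

namespace Ufnarovski

variable {X : Type*} (F : Set (List X)) (l : ℕ)

abbrev LegalWord (n : ℕ) : Type _ := {w : List X // w.length = n ∧ ListLegal F w}

def Adj (u v : List X) : Prop :=
  ∃ w : List X, w.length = l + 1 ∧ ListLegal F w ∧ w.take l = u ∧ w.drop 1 = v

open Classical in
noncomputable def adjMatrix : Matrix (LegalWord F l) (LegalWord F l) ℕ :=
  fun u v => if Adj F l u.1 v.1 then 1 else 0

variable {F l}

def LegalWord.dropFirst (k : ℕ) (w : LegalWord F (l + k)) : LegalWord F l :=
  ⟨w.1.drop k, by simp [w.2.1], w.2.2.drop k⟩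

def LegalWord.dropLast {n : ℕ} (w : LegalWord F (n + 1)) : LegalWord F n :=
  ⟨w.1.take n, by simp [w.2.1], w.2.2.take n⟩

theorem LegalWord.adj_dropFirst (k : ℕ) (w : LegalWord F (l + k + 1)) :
    Adj F l (w.dropLast.dropFirst k).1 (w.dropFirst (k + 1)).1 :=
  ⟨w.1.drop k, by simp [w.2.1]; omega, w.2.2.drop k, by simp [dropLast, dropFirst, List.drop_take],
    by simp [dropFirst, List.drop_drop]⟩

theorem LegalWord.eq_of_dropLast_eq_of_dropFirst_eq (hl : 1 ≤ l) {k : ℕ}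
    {w₁ w₂ : LegalWord F (l + k + 1)} (hlast : w₁.dropLast = w₂.dropLast)
    (hfirst : w₁.dropFirst (k + 1) = w₂.dropFirst (k + 1)) : w₁ = w₂ := by
  have hsplit : ∀ w : LegalWord F (l + k + 1),
      w.1 = w.dropLast.1 ++ (w.dropFirst (k + 1)).1.drop (l - 1) := fun w => by
    rw [dropLast, dropFirst, List.drop_drop, show k + 1 + (l - 1) = l + k by omega,
      List.take_append_drop]
  exact Subtype.ext <| by rw [hsplit w₁, hsplit w₂, hlast, hfirst]

theorem LegalWord.exists_dropLast_eq (hFle : ∀ f ∈ F, f.length ≤ l + 1) {k : ℕ}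
    {u v : LegalWord F l} (huv : Adj F l u.1 v.1) (w : LegalWord F (l + k))
    (hw : w.dropFirst k = u) :
    ∃ w' : LegalWord F (l + k + 1), w'.dropLast = w ∧ w'.dropFirst (k + 1) = v := by
  obtain ⟨e, he_len, he_legal, he_take, he_drop⟩ := huv
  have hw_len : w.1.length = l + k := w.2.1
  have htake : (w.1 ++ e.drop l).take (l + k) = w.1 := List.take_left' hw_len
  have hdrop : (w.1 ++ e.drop l).drop k = e := by
    rw [List.drop_append, show k - w.1.length = 0 by omega, List.drop_zero,
      show w.1.drop k = u.1 from congrArg Subtype.val hw, ← he_take, List.take_append_drop]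
  have hlen : (w.1 ++ e.drop l).length = l + k + 1 := by
    simp only [List.length_append, List.length_drop, hw_len, he_len]
    omega
  refine ⟨⟨w.1 ++ e.drop l, hlen, ?_⟩, Subtype.ext htake, Subtype.ext ?_⟩
  · refine ListLegal.of_take_of_drop hFle hlen (by rw [htake]; exact w.2.2) ?_
    rwa [show l + k - l = k by omega, hdrop]
  · simp only [dropFirst]
    rw [← List.drop_drop, hdrop, he_drop]

theorem card_fiber_dropFirst_zero (v : LegalWord F l) :
    Nat.card {w : LegalWord F (l + 0) // w.dropFirst 0 = v} = 1 :=
  Nat.card_eq_one_iff_exists.2 ⟨⟨v, rfl⟩, fun w => Subtype.ext w.2⟩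

theorem card_fiber_dropFirst_succ (hl : 1 ≤ l) (hFle : ∀ f ∈ F, f.length ≤ l + 1) (k : ℕ)
    (u v : LegalWord F l) :
    Nat.card {w : {w : LegalWord F (l + k + 1) // w.dropFirst (k + 1) = v} //
        w.1.dropLast.dropFirst k = u}
      = Nat.card {w : LegalWord F (l + k) // w.dropFirst k = u} * adjMatrix F l u v := by
  by_cases huv : Adj F l u.1 v.1
  · rw [adjMatrix, if_pos huv, mul_one]
    refine Nat.card_eq_of_bijective (fun w => ⟨w.1.1.dropLast, w.2⟩) ⟨?_, ?_⟩
    · rintro ⟨⟨w₁, h₁⟩, _⟩ ⟨⟨w₂, h₂⟩, _⟩ h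
      exact Subtype.ext <| Subtype.ext <|
        LegalWord.eq_of_dropLast_eq_of_dropFirst_eq hl (congrArg Subtype.val h) (h₁.trans h₂.symm)
    · rintro ⟨w, hw⟩
      obtain ⟨w', hlast, hfirst⟩ := LegalWord.exists_dropLast_eq hFle huv w hw
      exact ⟨⟨⟨w', hfirst⟩, hlast ▸ hw⟩, Subtype.ext hlast⟩
  · rw [adjMatrix, if_neg huv, mul_zero, Nat.card_eq_zero]
    refine Or.inl ⟨fun w => huv ?_⟩
    have := w.1.1.adj_dropFirst k
    rwa [w.2, w.1.2] at this

variable [Finite X]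

theorem card_fiber_dropFirst_succ_eq_sum (hl : 1 ≤ l) (hFle : ∀ f ∈ F, f.length ≤ l + 1)
    (k : ℕ) (v : LegalWord F l) :
    Nat.card {w : LegalWord F (l + k + 1) // w.dropFirst (k + 1) = v}
      = ∑ u, Nat.card {w : LegalWord F (l + k) // w.dropFirst k = u} * adjMatrix F l u v := by
  rw [Nat.card_eq_sum_card_fiber
    fun w : {w : LegalWord F (l + k + 1) // w.dropFirst (k + 1) = v} => w.1.dropLast.dropFirst k]
  exact Finset.sum_congr rfl fun u _ => card_fiber_dropFirst_succ hl hFle k u v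

variable [DecidableEq X]

theorem card_fiber_dropFirst_eq_sum_pow (hl : 1 ≤ l) (hFle : ∀ f ∈ F, f.length ≤ l + 1)
    (k : ℕ) (v : LegalWord F l) :
    Nat.card {w : LegalWord F (l + k) // w.dropFirst k = v} = ∑ u, (adjMatrix F l ^ k) u v := by
  induction k generalizing v with
  | zero => exact (card_fiber_dropFirst_zero v).trans (by simp [Matrix.one_apply])
  | succ k ih =>
    refine (card_fiber_dropFirst_succ_eq_sum hl hFle k v).trans ?_
    simp_rw [ih, pow_succ, Matrix.mul_apply, Finset.sum_mul]
    exact Finset.sum_comm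

theorem card_legalWord_add_eq_sum_pow (hl : 1 ≤ l) (hFle : ∀ f ∈ F, f.length ≤ l + 1)
    (k : ℕ) : Nat.card (LegalWord F (l + k)) = ∑ u, ∑ v, (adjMatrix F l ^ k) u v := by
  rw [Nat.card_eq_sum_card_fiber (LegalWord.dropFirst k)]
  exact (Finset.sum_congr rfl fun v _ => card_fiber_dropFirst_eq_sum_pow hl hFle k v).trans
    Finset.sum_comm

end Ufnarovski

section LinftyOpNorm

attribute [local instance] Matrix.linftyOpSeminormedAddCommGroup

variable {m n α : Type*} [Fintype m] [Fintype n] [SeminormedAddCommGroup α]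

theorem Matrix.linfty_opNNNorm_le_sum_nnnorm (A : Matrix m n α) :
    ‖A‖₊ ≤ ∑ i, ∑ j, ‖A i j‖₊ := by
  rw [Matrix.linfty_opNNNorm_def]
  exact Finset.sup_le fun i _ =>
    Finset.single_le_sum (f := fun i => ∑ j, ‖A i j‖₊) (fun _ _ => bot_le) (Finset.mem_univ i)

theorem Matrix.sum_nnnorm_le_card_mul_linfty_opNNNorm (A : Matrix m n α) :
    ∑ i, ∑ j, ‖A i j‖₊ ≤ Fintype.card m * ‖A‖₊ := by
  rw [Matrix.linfty_opNNNorm_def, ← nsmul_eq_mul]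
  exact Finset.sum_le_card_nsmul _ _ _ fun i _ =>
    Finset.le_sup (f := fun i => ∑ j, ‖A i j‖₊) (Finset.mem_univ i)

end LinftyOpNorm

theorem tendsto_norm_pow_rpow_one_div_spectralRadius {A : Type*} [NormedRing A]
    [NormedAlgebra ℂ A] [CompleteSpace A] (a : A) :
    Tendsto (fun k : ℕ => ‖a ^ k‖ ^ (1 / (k : ℝ))) atTop (𝓝 (spectralRadius ℂ a).toReal) := by
  have hfin : spectralRadius ℂ a ≠ ⊤ := by
    refine ne_top_of_le_ne_top ?_ (spectrum.spectralRadius_le_pow_nnnorm_pow_one_div ℂ a 0)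
    simp only [pow_one, Nat.cast_zero, zero_add, one_div_one, ENNReal.rpow_one]
    exact ENNReal.mul_ne_top ENNReal.coe_ne_top ENNReal.coe_ne_top
  refine ((ENNReal.tendsto_toReal hfin).comp
    (spectrum.pow_norm_pow_one_div_tendsto_nhds_spectralRadius a)).congr fun k => ?_
  exact ENNReal.toReal_ofReal (by positivity)

theorem Filter.Tendsto.rpow_one_div_of_le_of_le_mul {a b : ℕ → ℝ} {C ρ : ℝ} (hC : 0 < C)
    (ha : Tendsto (fun k : ℕ => a k ^ (1 / (k : ℝ))) atTop (𝓝 ρ)) (ha0 : ∀ k, 0 ≤ a k)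
    (hab : ∀ k, a k ≤ b k) (hba : ∀ k, b k ≤ C * a k) :
    Tendsto (fun k : ℕ => b k ^ (1 / (k : ℝ))) atTop (𝓝 ρ) := by
  have hC1 : Tendsto (fun k : ℕ => C ^ (1 / (k : ℝ))) atTop (𝓝 1) := by
    simpa using tendsto_const_nhds.rpow tendsto_one_div_atTop_nhds_zero_nat (Or.inl hC.ne')
  have hCa := hC1.mul ha
  rw [one_mul] at hCa
  refine tendsto_of_tendsto_of_tendsto_of_le_of_le ha hCa
    (fun k => Real.rpow_le_rpow (ha0 k) (hab k) (by positivity)) fun k => ?_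
  calc b k ^ (1 / (k : ℝ)) ≤ (C * a k) ^ (1 / (k : ℝ)) :=
        Real.rpow_le_rpow ((ha0 k).trans (hab k)) (hba k) (by positivity)
    _ = C ^ (1 / (k : ℝ)) * a k ^ (1 / (k : ℝ)) := Real.mul_rpow hC.le (ha0 k)

theorem Filter.Tendsto.rpow_one_div_sub {a : ℕ → ℝ} {ρ : ℝ} (ha0 : ∀ k, 0 ≤ a k)
    (ha : Tendsto (fun k : ℕ => a k ^ (1 / (k : ℝ))) atTop (𝓝 ρ)) (l : ℕ) :
    Tendsto (fun n : ℕ => a (n - l) ^ (1 / (n : ℝ))) atTop (𝓝 ρ) := by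
  have hratio : Tendsto (fun n : ℕ => ((n - l : ℕ) : ℝ) / n) atTop (𝓝 1) := by
    have := tendsto_const_nhds (x := (1 : ℝ)).sub (tendsto_const_div_atTop_nhds_zero_nat (l : ℝ))
    rw [sub_zero] at this
    refine this.congr' ?_
    filter_upwards [eventually_gt_atTop l] with n hn
    have hn0 : (n : ℝ) ≠ 0 := by exact_mod_cast (Nat.zero_lt_of_lt hn).ne'
    rw [Nat.cast_sub hn.le]
    field_simp
  have := (ha.comp (tendsto_sub_atTop_nat l)).rpow hratio (Or.inr one_pos)
  rw [Real.rpow_one] at this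
  refine this.congr' ?_
  filter_upwards [eventually_gt_atTop l] with n hn
  have hnl : ((n - l : ℕ) : ℝ) ≠ 0 := by exact_mod_cast (Nat.sub_pos_of_lt hn).ne'
  rw [Function.comp_apply, ← Real.rpow_mul (ha0 _)]
  congr 1
  field_simp

section SpectralRadius

attribute [local instance] Matrix.linftyOpNormedAddCommGroup Matrix.linftyOpNormedRing
  Matrix.linftyOpNormedAlgebra

theorem Matrix.tendsto_sum_pow_rpow_one_div_spectralRadius {V : Type*} [Fintype V]
    [DecidableEq V] (N : Matrix V V ℕ) :
    Tendsto (fun k : ℕ => ((∑ i, ∑ j, (N ^ k) i j : ℕ) : ℝ) ^ (1 / (k : ℝ))) atTop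
      (𝓝 (spectralRadius ℂ (N.map ((↑) : ℕ → ℂ))).toReal) := by
  have : CompleteSpace (Matrix V V ℂ) := FiniteDimensional.complete ℂ _
  let A := N.map (Nat.castRingHom ℂ)
  have hsum : ∀ k, ∑ i, ∑ j, ‖(A ^ k) i j‖₊ = ((∑ i, ∑ j, (N ^ k) i j : ℕ) : NNReal) := by
    intro k
    rw [show A ^ k = (N ^ k).map (Nat.castRingHom ℂ) from (Matrix.map_pow _ _ _).symm]
    simp [Matrix.map_apply]
  have hlow : ∀ k, ‖A ^ k‖ ≤ ((∑ i, ∑ j, (N ^ k) i j : ℕ) : ℝ) := fun k => by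
    exact_mod_cast (Matrix.linfty_opNNNorm_le_sum_nnnorm (A ^ k)).trans (hsum k).le
  -- `+ 1` keeps the constant positive when `V` is empty
  have hup : ∀ k, ((∑ i, ∑ j, (N ^ k) i j : ℕ) : ℝ) ≤ (Fintype.card V + 1) * ‖A ^ k‖ :=
      fun k => by
    have hcard : ((∑ i, ∑ j, (N ^ k) i j : ℕ) : ℝ) ≤ Fintype.card V * ‖A ^ k‖ := by
      exact_mod_cast (hsum k).symm.le.trans (Matrix.sum_nnnorm_le_card_mul_linfty_opNNNorm _)
    nlinarith [norm_nonneg (A ^ k)]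
  exact (tendsto_norm_pow_rpow_one_div_spectralRadius A).rpow_one_div_of_le_of_le_mul
    (by positivity) (fun k => norm_nonneg _) hlow hup

end SpectralRadius

/-- Let `F` be a finite nonempty set of forbidden words, each of length at least `2`, with
`l + 1` the maximal length of a word of `F`.  Let `M` be the adjacency matrix of the
Ufnarovski graph: the rows and columns of `M` are indexed by the legal words of length `l`,
with `M u v = 1` if some legal word of length `l + 1` has prefix `u` and suffix `v`, and
`M u v = 0` otherwise.  Then `|L_n| ^ (1/n)` tends to the spectral radius of `M`: the
algebraic entropy of the finitely presented monomial algebra equals the spectral radius of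
the adjacency matrix of its Ufnarovski graph. -/
theorem tendsto_root_card_legal_spectralRadius
    (X : Type*) [Fintype X] [DecidableEq X] (F : Finset (List X)) (l : ℕ)
    (hF2 : ∀ f ∈ F, 2 ≤ f.length) (hFle : ∀ f ∈ F, f.length ≤ l + 1)
    (hFmax : ∃ f ∈ F, f.length = l + 1)
    (M : Matrix {u : List X // u.length = l ∧ ListLegal (↑F) u}
      {u : List X // u.length = l ∧ ListLegal (↑F) u} ℝ)
    (hM : ∀ u v : {u : List X // u.length = l ∧ ListLegal (↑F) u},
      ((∃ w : List X, w.length = l + 1 ∧ ListLegal (↑F) w ∧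
          w.take l = u.1 ∧ w.drop 1 = v.1) → M u v = 1) ∧
      ((¬ ∃ w : List X, w.length = l + 1 ∧ ListLegal (↑F) w ∧
          w.take l = u.1 ∧ w.drop 1 = v.1) → M u v = 0)) :
    Filter.Tendsto
      (fun n : ℕ =>
        (Nat.card {w : List X // w.length = n ∧ ListLegal (↑F) w} : ℝ) ^ (1 / (n : ℝ)))
      Filter.atTop
      (nhds (spectralRadius ℂ (M.map (algebraMap ℝ ℂ))).toReal) := by
  have hl : 1 ≤ l := by
    obtain ⟨f, hf, hfl⟩ := hFmax
    have := hF2 f hf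
    omega
  have hMN : M.map (algebraMap ℝ ℂ) = (Ufnarovski.adjMatrix (F : Set (List X)) l).map (↑) := by
    ext u v
    by_cases huv : Ufnarovski.Adj (F : Set (List X)) l u.1 v.1
    · simp [Ufnarovski.adjMatrix, huv, (hM u v).1 huv]
    · simp [Ufnarovski.adjMatrix, huv, (hM u v).2 huv]
  rw [hMN]
  refine ((Matrix.tendsto_sum_pow_rpow_one_div_spectralRadius _).rpow_one_div_sub
    (fun _ => Nat.cast_nonneg _) l).congr' ?_
  filter_upwards [eventually_ge_atTop l] with n hn
  obtain ⟨k, rfl⟩ := Nat.exists_eq_add_of_le hn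
  rw [Nat.add_sub_cancel_left,
    ← Ufnarovski.card_legalWord_add_eq_sum_pow hl fun f hf => hFle f hf]
end
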